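/- arXiv:1408.2814 — 2 statements merged into one kernel-verified Lean document; each statement's English description precedes it below -/
import Mathlib

section
/- Let p ∈ ℤ and q ∈ ℕ* be relatively prime, γ = 2πp/q, ω ∈ ℝ, and M_K(θ₁,θ₂,ω) the 3q×3q kagome matrix. Let D_J = diag(J_{p,q}, J_{p,q}, J_{p,q}) and D_K = diag(K_q, K_q, K_q) (3×3 block-diagonal). Then D_J* M_K(θ₁,θ₂,ω) D_J = M_K(θ₁, θ₂ + 2πp/q, ω) and D_K* M_K(θ₁,θ₂,ω) D_K = M_K(θ₁ - 2πp/q, θ₂, ω) for all (θ₁,θ₂) ∈ ℝ². -/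
noncomputable section

open Matrix Complex

/-- `J_{p,q}` : the `q × q` diagonal matrix with diagonal entries `e^{i(j-1)γ}`, `j = 1,…,q`,
where `γ = 2πp/q`. -/
def Jmat (p : ℤ) (q : ℕ) : Matrix (Fin q) (Fin q) ℂ :=
  Matrix.diagonal fun j => Complex.exp (Complex.I * ((j : ℕ) : ℂ) *
    ((2 * Real.pi * (p : ℝ) / (q : ℝ) : ℝ) : ℂ))

/-- `K_q` : the `q × q` cyclic shift matrix, `(K_q)_{jk} = 1` if `k ≡ j+1 [q]`, `0` otherwise. -/
def Kmat (q : ℕ) : Matrix (Fin q) (Fin q) ℂ :=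
  Matrix.of fun j k => if ((j : ℕ) + 1) % q = (k : ℕ) then 1 else 0

/-- Block `A(θ₁,θ₂,ω) = e^{i(ω+γ/8)}(e^{-iθ₁}J* + e^{-iγ/2}e^{-i(θ₁-θ₂)}J*K)`. -/
def AK (p : ℤ) (q : ℕ) (θ₁ θ₂ ω : ℝ) : Matrix (Fin q) (Fin q) ℂ :=
  Complex.exp (Complex.I * ((ω + 2 * Real.pi * (p : ℝ) / (q : ℝ) / 8 : ℝ) : ℂ)) •
    (Complex.exp (-(Complex.I) * (θ₁ : ℂ)) • (Jmat p q)ᴴ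
      + (Complex.exp (-(Complex.I) * ((2 * Real.pi * (p : ℝ) / (q : ℝ) / 2 : ℝ) : ℂ)) *
          Complex.exp (-(Complex.I) * ((θ₁ - θ₂ : ℝ) : ℂ))) • ((Jmat p q)ᴴ * Kmat q))

/-- Block `B(θ₁,θ₂,ω) = e^{-i(ω+γ/8)}(e^{-iθ₁}J* + e^{-iθ₂}K*)`. -/
def BK (p : ℤ) (q : ℕ) (θ₁ θ₂ ω : ℝ) : Matrix (Fin q) (Fin q) ℂ :=
  Complex.exp (-(Complex.I) * ((ω + 2 * Real.pi * (p : ℝ) / (q : ℝ) / 8 : ℝ) : ℂ)) •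
    (Complex.exp (-(Complex.I) * (θ₁ : ℂ)) • (Jmat p q)ᴴ
      + Complex.exp (-(Complex.I) * (θ₂ : ℂ)) • (Kmat q)ᴴ)

/-- Block `C(θ₁,θ₂,ω) = e^{i(ω+γ/8)}(e^{-iγ/2}e^{i(θ₁-θ₂)}JK* + e^{-iθ₂}K*)`. -/
def CK (p : ℤ) (q : ℕ) (θ₁ θ₂ ω : ℝ) : Matrix (Fin q) (Fin q) ℂ :=
  Complex.exp (Complex.I * ((ω + 2 * Real.pi * (p : ℝ) / (q : ℝ) / 8 : ℝ) : ℂ)) •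
    ((Complex.exp (-(Complex.I) * ((2 * Real.pi * (p : ℝ) / (q : ℝ) / 2 : ℝ) : ℂ)) *
        Complex.exp (Complex.I * ((θ₁ - θ₂ : ℝ) : ℂ))) • (Jmat p q * (Kmat q)ᴴ)
      + Complex.exp (-(Complex.I) * (θ₂ : ℂ)) • (Kmat q)ᴴ)

/-- The Hou (kagome) matrix : the `3q × 3q` block matrix `[[0,A,B],[A*,0,C],[B*,C*,0]]`,
indexed by `Fin 3 × Fin q` (first component = block index). -/
def MK (p : ℤ) (q : ℕ) (θ₁ θ₂ ω : ℝ) : Matrix (Fin 3 × Fin q) (Fin 3 × Fin q) ℂ :=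
  Matrix.of fun x y =>
    (![![0, AK p q θ₁ θ₂ ω, BK p q θ₁ θ₂ ω],
       ![(AK p q θ₁ θ₂ ω)ᴴ, 0, CK p q θ₁ θ₂ ω],
       ![(BK p q θ₁ θ₂ ω)ᴴ, (CK p q θ₁ θ₂ ω)ᴴ, 0]] x.1 y.1) x.2 y.2

/-- The characteristic polynomial `P_K(θ₁,θ₂,ω,λ) = det(M_K(θ₁,θ₂,ω) - λ I_{3q})`. -/
def PK (p : ℤ) (q : ℕ) (θ₁ θ₂ ω : ℝ) (l : ℂ) : ℂ :=
  Matrix.det (MK p q θ₁ θ₂ ω - l • (1 : Matrix (Fin 3 × Fin q) (Fin 3 × Fin q) ℂ))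

/-- `3 × 3` block-diagonal matrix `diag(M, M, M)`. -/
def blockDiag3 (q : ℕ) (M : Matrix (Fin q) (Fin q) ℂ) :
    Matrix (Fin 3 × Fin q) (Fin 3 × Fin q) ℂ :=
  Matrix.of fun x y => if x.1 = y.1 then M x.2 y.2 else 0


/-
`J_{p,q}` and `K_q` are unitary and satisfy the commutation relation `K J = e^{iγ} J K`; at the
wrap-around entry this uses `e^{iqγ} = e^{2πip} = 1`. So conjugation by `J` fixes `J` and
multiplies `K` by `e^{iγ}`, while conjugation by `K` fixes `K` and multiplies `J` by `e^{-iγ}`.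
Conjugation by a unitary is a ⋆-algebra automorphism, the blocks `A`, `B`, `C` are
⋆-polynomials in `J` and `K`, and their coefficients turn these phases into shifts of `θ₁`, `θ₂`.
Finally, conjugating by `diag(U, U, U)` conjugates each block of `M_K` by `U`.
-/

lemma val_finRotate {q : ℕ} (j : Fin q) : (finRotate q j : ℕ) = ((j : ℕ) + 1) % q := by
  have := j.neZero
  rw [finRotate_apply, Fin.val_add, Fin.val_one', Nat.add_mod_mod]

lemma Kmat_eq_permMatrix (q : ℕ) : Kmat q = (finRotate q).permMatrix ℂ := by
  ext j k
  simp [Kmat, PEquiv.toMatrix_apply, ← val_finRotate, Fin.val_inj]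

lemma Kmat_mem_unitaryGroup (q : ℕ) : Kmat q ∈ unitaryGroup (Fin q) ℂ := by
  rw [mem_unitaryGroup_iff, star_eq_conjTranspose, Kmat_eq_permMatrix, conjTranspose_permMatrix,
    ← permMatrix_mul, inv_mul_cancel, permMatrix_one]

lemma Jmat_mem_unitaryGroup (p : ℤ) (q : ℕ) : Jmat p q ∈ unitaryGroup (Fin q) ℂ := by
  rw [mem_unitaryGroup_iff, star_eq_conjTranspose, Jmat, diagonal_conjTranspose,
    diagonal_mul_diagonal, ← diagonal_one]
  congr 1
  ext j
  rw [Pi.star_apply, RCLike.star_def, ← Complex.exp_conj, ← Complex.exp_add, ← Complex.exp_zero]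
  simp only [map_mul, Complex.conj_I, Complex.conj_ofReal, map_natCast]
  ring_nf

lemma exp_I_mul_natCast_mod_mul (p : ℤ) (q n : ℕ) :
    Complex.exp (Complex.I * ((n % q : ℕ) : ℂ) * ((2 * Real.pi * (p : ℝ) / (q : ℝ) : ℝ) : ℂ)) =
      Complex.exp (Complex.I * (n : ℂ) * ((2 * Real.pi * (p : ℝ) / (q : ℝ) : ℝ) : ℂ)) := by
  rcases Nat.eq_zero_or_pos q with rfl | hq
  · rw [Nat.mod_zero]
  have hq' : (q : ℂ) ≠ 0 := by exact_mod_cast hq.ne'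
  have hn : (n : ℂ) = (n % q : ℕ) + q * (n / q : ℕ) := by
    exact_mod_cast (Nat.mod_add_div n q).symm
  generalize n % q = r, n / q = m at hn
  have hsplit : Complex.I * (n : ℂ) * ((2 * Real.pi * (p : ℝ) / (q : ℝ) : ℝ) : ℂ) =
      Complex.I * (r : ℂ) * ((2 * Real.pi * (p : ℝ) / (q : ℝ) : ℝ) : ℂ) +
        ((p * m : ℤ) : ℂ) * (2 * Real.pi * Complex.I) := by
    rw [hn]
    push_cast
    field_simp
  rw [hsplit, Complex.exp_add, Complex.exp_int_mul_two_pi_mul_I, mul_one]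

lemma Kmat_mul_Jmat (p : ℤ) (q : ℕ) :
    Kmat q * Jmat p q =
      Complex.exp (Complex.I * ((2 * Real.pi * (p : ℝ) / (q : ℝ) : ℝ) : ℂ)) •
        (Jmat p q * Kmat q) := by
  ext j k
  simp only [Kmat, Jmat, mul_diagonal, diagonal_mul, Matrix.smul_apply, of_apply, smul_eq_mul]
  split_ifs with h
  · rw [← h, exp_I_mul_natCast_mod_mul, one_mul, mul_one, ← Complex.exp_add]
    push_cast
    ring_nf
  · simp

lemma conjTranspose_Jmat_mul_Kmat_mul_Jmat (p : ℤ) (q : ℕ) :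
    (Jmat p q)ᴴ * Kmat q * Jmat p q =
      Complex.exp (Complex.I * ((2 * Real.pi * (p : ℝ) / (q : ℝ) : ℝ) : ℂ)) • Kmat q := by
  have hJJ : (Jmat p q)ᴴ * Jmat p q = 1 := mem_unitaryGroup_iff'.mp (Jmat_mem_unitaryGroup p q)
  rw [Matrix.mul_assoc, Kmat_mul_Jmat, Matrix.mul_smul, ← Matrix.mul_assoc, hJJ, Matrix.one_mul]

lemma conjTranspose_Kmat_mul_Jmat_mul_Kmat (p : ℤ) (q : ℕ) :
    (Kmat q)ᴴ * Jmat p q * Kmat q =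
      Complex.exp (Complex.I * ((-(2 * Real.pi * (p : ℝ) / (q : ℝ)) : ℝ) : ℂ)) • Jmat p q := by
  have hphase : Complex.exp (Complex.I * ((-(2 * Real.pi * (p : ℝ) / (q : ℝ)) : ℝ) : ℂ)) *
      Complex.exp (Complex.I * ((2 * Real.pi * (p : ℝ) / (q : ℝ) : ℝ) : ℂ)) = 1 := by
    rw [← Complex.exp_add, Complex.ofReal_neg, mul_neg, neg_add_cancel, Complex.exp_zero]
  have hJK : Jmat p q * Kmat q =
      Complex.exp (Complex.I * ((-(2 * Real.pi * (p : ℝ) / (q : ℝ)) : ℝ) : ℂ)) •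
        (Kmat q * Jmat p q) := by
    rw [Kmat_mul_Jmat, smul_smul, hphase, one_smul]
  have hKK : (Kmat q)ᴴ * Kmat q = 1 := mem_unitaryGroup_iff'.mp (Kmat_mem_unitaryGroup q)
  rw [Matrix.mul_assoc, hJK, Matrix.mul_smul, ← Matrix.mul_assoc, hKK, Matrix.one_mul]

lemma star_exp_I_mul (x : ℝ) :
    star (Complex.exp (Complex.I * x)) = Complex.exp (-Complex.I * x) := by
  rw [RCLike.star_def, ← Complex.exp_conj, map_mul, Complex.conj_I, Complex.conj_ofReal]

section Covariance

variable {p : ℤ} {q : ℕ} {F : Type*}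
  [FunLike F (Matrix (Fin q) (Fin q) ℂ) (Matrix (Fin q) (Fin q) ℂ)]
  [AlgHomClass F ℂ (Matrix (Fin q) (Fin q) ℂ) (Matrix (Fin q) (Fin q) ℂ)]
  [StarHomClass F (Matrix (Fin q) (Fin q) ℂ) (Matrix (Fin q) (Fin q) ℂ)] {φ : F} {α β : ℝ}

lemma map_AK (hJ : φ (Jmat p q) = Complex.exp (Complex.I * α) • Jmat p q)
    (hK : φ (Kmat q) = Complex.exp (Complex.I * β) • Kmat q) (θ₁ θ₂ ω : ℝ) :
    φ (AK p q θ₁ θ₂ ω) = AK p q (θ₁ + α) (θ₂ + β) ω := by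
  simp only [AK, ← star_eq_conjTranspose, map_smul, map_add, map_mul, map_star, hJ, hK,
    star_smul, star_exp_I_mul, smul_mul_smul, smul_smul]
  congr 3 <;> simp only [← Complex.exp_add] <;> congr 1 <;> push_cast <;> ring

lemma map_BK (hJ : φ (Jmat p q) = Complex.exp (Complex.I * α) • Jmat p q)
    (hK : φ (Kmat q) = Complex.exp (Complex.I * β) • Kmat q) (θ₁ θ₂ ω : ℝ) :
    φ (BK p q θ₁ θ₂ ω) = BK p q (θ₁ + α) (θ₂ + β) ω := by
  simp only [BK, ← star_eq_conjTranspose, map_smul, map_add, map_star, hJ, hK, star_smul,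
    star_exp_I_mul, smul_smul]
  congr 3 <;> simp only [← Complex.exp_add] <;> congr 1 <;> push_cast <;> ring

lemma map_CK (hJ : φ (Jmat p q) = Complex.exp (Complex.I * α) • Jmat p q)
    (hK : φ (Kmat q) = Complex.exp (Complex.I * β) • Kmat q) (θ₁ θ₂ ω : ℝ) :
    φ (CK p q θ₁ θ₂ ω) = CK p q (θ₁ + α) (θ₂ + β) ω := by
  simp only [CK, ← star_eq_conjTranspose, map_smul, map_add, map_mul, map_star, hJ, hK,
    star_smul, star_exp_I_mul, smul_mul_smul, smul_smul]
  congr 3 <;> simp only [← Complex.exp_add] <;> congr 1 <;> push_cast <;> ring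

end Covariance

lemma Matrix.comp_diagonal_conj {ι n α : Type*} [Fintype ι] [DecidableEq ι] [Fintype n]
    [Semiring α] [StarRing α] (U : Matrix n n α) (M : Matrix ι ι (Matrix n n α)) :
    (comp ι ι n n α (diagonal fun _ => U))ᴴ * comp ι ι n n α M *
        comp ι ι n n α (diagonal fun _ => U) =
      comp ι ι n n α (M.map fun X => Uᴴ * X * U) := by
  rw [conjTranspose_comp', ← compRingEquiv_apply, ← compRingEquiv_apply, ← compRingEquiv_apply,
    ← map_mul, ← map_mul, diagonal_conjTranspose, compRingEquiv_apply]
  congr 1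
  ext i j : 2
  simp only [diagonal_mul, mul_diagonal, map_apply, Pi.star_apply, star_eq_conjTranspose]

def kagomeBlocks {n α : Type*} [Zero α] [Star α] (A B C : Matrix n n α) :
    Matrix (Fin 3) (Fin 3) (Matrix n n α) :=
  !![0, A, B; Aᴴ, 0, C; Bᴴ, Cᴴ, 0]

lemma kagomeBlocks_map_conj {n α : Type*} [Fintype n] [Semiring α] [StarRing α]
    (A B C U : Matrix n n α) :
    (kagomeBlocks A B C).map (fun X => Uᴴ * X * U) =
      kagomeBlocks (Uᴴ * A * U) (Uᴴ * B * U) (Uᴴ * C * U) := by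
  ext i j : 2
  fin_cases i <;> fin_cases j <;>
    simp only [kagomeBlocks, map_apply, of_apply, cons_val', Fin.zero_eta, Fin.mk_one,
      Fin.reduceFinMk, cons_val_zero, cons_val_one, cons_val_two, head_cons, tail_cons,
      Matrix.mul_zero, Matrix.zero_mul, conjTranspose_mul, conjTranspose_conjTranspose,
      Matrix.mul_assoc]

lemma MK_eq_comp (p : ℤ) (q : ℕ) (θ₁ θ₂ ω : ℝ) :
    MK p q θ₁ θ₂ ω =
      comp _ _ _ _ _ (kagomeBlocks (AK p q θ₁ θ₂ ω) (BK p q θ₁ θ₂ ω) (CK p q θ₁ θ₂ ω)) :=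
  rfl

lemma blockDiag3_eq_comp (q : ℕ) (M : Matrix (Fin q) (Fin q) ℂ) :
    blockDiag3 q M = comp _ _ _ _ _ (diagonal fun _ => M) := by
  ext x y
  simp [blockDiag3, diagonal_apply, apply_ite (fun X : Matrix (Fin q) (Fin q) ℂ => X x.2 y.2)]

lemma conjTranspose_blockDiag3_mul_MK_mul_blockDiag3 {p : ℤ} {q : ℕ}
    (U : unitaryGroup (Fin q) ℂ) {α β : ℝ}
    (hJ : (U : Matrix (Fin q) (Fin q) ℂ)ᴴ * Jmat p q * U =
      Complex.exp (Complex.I * α) • Jmat p q)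
    (hK : (U : Matrix (Fin q) (Fin q) ℂ)ᴴ * Kmat q * U = Complex.exp (Complex.I * β) • Kmat q)
    (θ₁ θ₂ ω : ℝ) :
    (blockDiag3 q U)ᴴ * MK p q θ₁ θ₂ ω * blockDiag3 q U = MK p q (θ₁ + α) (θ₂ + β) ω := by
  have hφ (X : Matrix (Fin q) (Fin q) ℂ) :
      (U : Matrix (Fin q) (Fin q) ℂ)ᴴ * X * U = Unitary.conjStarAlgAut ℂ _ (star U) X := by
    rw [Unitary.conjStarAlgAut_star_apply, star_eq_conjTranspose]
  rw [hφ] at hJ hK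
  rw [blockDiag3_eq_comp, MK_eq_comp, MK_eq_comp, comp_diagonal_conj, kagomeBlocks_map_conj,
    hφ, hφ, hφ, map_AK hJ hK, map_BK hJ hK, map_CK hJ hK]

theorem stmt_10_general (p : ℤ) (q : ℕ)
    (ω θ₁ θ₂ : ℝ) :
    (blockDiag3 q (Jmat p q))ᴴ * MK p q θ₁ θ₂ ω * blockDiag3 q (Jmat p q) =
        MK p q θ₁ (θ₂ + 2 * Real.pi * (p : ℝ) / (q : ℝ)) ω ∧
    (blockDiag3 q (Kmat q))ᴴ * MK p q θ₁ θ₂ ω * blockDiag3 q (Kmat q) =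
        MK p q (θ₁ - 2 * Real.pi * (p : ℝ) / (q : ℝ)) θ₂ ω := by
  have hfix (U : unitaryGroup (Fin q) ℂ) :
      (U : Matrix (Fin q) (Fin q) ℂ)ᴴ * U * U = Complex.exp (Complex.I * (0 : ℝ)) • U := by
    rw [Complex.ofReal_zero, mul_zero, Complex.exp_zero, one_smul, ← star_eq_conjTranspose,
      Unitary.star_mul_self_of_mem U.2, Matrix.one_mul]
  constructor
  · have := conjTranspose_blockDiag3_mul_MK_mul_blockDiag3 ⟨Jmat p q, Jmat_mem_unitaryGroup p q⟩
      (hfix _) (conjTranspose_Jmat_mul_Kmat_mul_Jmat p q) θ₁ θ₂ ω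
    rwa [add_zero] at this
  · have := conjTranspose_blockDiag3_mul_MK_mul_blockDiag3 ⟨Kmat q, Kmat_mem_unitaryGroup q⟩
      (conjTranspose_Kmat_mul_Jmat_mul_Kmat p q) (hfix _) θ₁ θ₂ ω
    rwa [add_zero, ← sub_eq_add_neg] at this

theorem stmt_10 (p : ℤ) (q : ℕ) (hq : 0 < q) (hpq : Int.gcd p (q : ℤ) = 1)
    (ω θ₁ θ₂ : ℝ) :
    (blockDiag3 q (Jmat p q))ᴴ * MK p q θ₁ θ₂ ω * blockDiag3 q (Jmat p q) =
        MK p q θ₁ (θ₂ + 2 * Real.pi * (p : ℝ) / (q : ℝ)) ω ∧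
    (blockDiag3 q (Kmat q))ᴴ * MK p q θ₁ θ₂ ω * blockDiag3 q (Kmat q) =
        MK p q (θ₁ - 2 * Real.pi * (p : ℝ) / (q : ℝ)) θ₂ ω :=
  stmt_10_general p q ω θ₁ θ₂
end
end

section
/- Let p ∈ ℤ and q ∈ ℕ* be relatively prime, γ = 2πp/q, ω ∈ ℝ, and P_K(θ₁,θ₂,ω,λ) the characteristic polynomial of the 3q×3q kagome matrix M_K(θ₁,θ₂,ω). Then the function (θ₁,θ₂) ↦ P_K(θ₁ + pπ, θ₂ + pπ, ω, λ) is invariant under the rotation r(θ₁,θ₂) = (-θ₁ + θ₂, -θ₁), i.e. P_K(-θ₁ + θ₂ + pπ, -θ₁ + pπ, ω, λ) = P_K(θ₁ + pπ, θ₂ + pπ, ω, λ) for all (θ₁,θ₂) ∈ ℝ² and λ ∈ ℂ. -/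
noncomputable section

open Matrix Complex

/-!
`J` and `K` form a clock-and-shift pair, `K J = e^{iγ} J K`. Conjugation by the chirped Fourier
matrix `V_{jk} = e^{iπp(jq + j² + 2jk)/q}` maps `J ↦ K*` and `K ↦ e^{iπp(q-1)/q} J K*`; since
`gcd(p, q) = 1` the columns of `V` are orthogonal, `V* V = q`, so this conjugation also commutes
with taking adjoints. Under it the blocks `C`, `A*`, `B*` of `M_K(θ + pπ)` become the blocks `A`,
`B`, `C` of `M_K(rθ + pπ)`: the signs `(-1)^p` hidden in the scalar factors are absorbed by the
shift of the angles by `pπ`. So conjugating by `V` and permuting the three sublattices cyclically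
takes one matrix to the other, and the two have the same characteristic polynomial.
-/

open scoped Real

section Intertwining

variable {n R 𝕜 : Type*} [Fintype n]

def Intertwines [CommSemiring R] (V X Y : Matrix n n R) : Prop := X * V = V * Y

namespace Intertwines

variable [CommSemiring R] {V X Y X' Y' : Matrix n n R}

lemma mul (h : Intertwines V X Y) (h' : Intertwines V X' Y') :
    Intertwines V (X * X') (Y * Y') := by
  unfold Intertwines at *
  rw [Matrix.mul_assoc, h', ← Matrix.mul_assoc, h, Matrix.mul_assoc]

lemma add (h : Intertwines V X Y) (h' : Intertwines V X' Y') :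
    Intertwines V (X + X') (Y + Y') := by
  unfold Intertwines at *
  rw [Matrix.add_mul, Matrix.mul_add, h, h']

lemma smul (h : Intertwines V X Y) (a : R) : Intertwines V (a • X) (a • Y) := by
  unfold Intertwines at *
  rw [Matrix.smul_mul, Matrix.mul_smul, h]

lemma of_eq_right {Y₀ : Matrix n n R} (h : Intertwines V X Y) (hY : Y₀ = Y) :
    Intertwines V X Y₀ :=
  hY ▸ h

end Intertwines

variable [DecidableEq n] [Field 𝕜] [StarRing 𝕜]

lemma Matrix.mul_conjTranspose_eq_smul_one {V : Matrix n n 𝕜} {c : 𝕜}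
    (hV : Vᴴ * V = c • 1) (hc : c ≠ 0) : V * Vᴴ = c • 1 := by
  have h : (c⁻¹ • Vᴴ) * V = 1 := by
    rw [Matrix.smul_mul, hV, smul_smul, inv_mul_cancel₀ hc, one_smul]
  rw [← smul_right_inj (inv_ne_zero hc), smul_smul, inv_mul_cancel₀ hc, one_smul,
    ← Matrix.mul_smul, mul_eq_one_comm.mp h]

lemma Intertwines.conjTranspose {V X Y : Matrix n n 𝕜} {c : 𝕜} (hV : Vᴴ * V = c • 1)
    (hc : c ≠ 0) (h : Intertwines V X Y) : Intertwines V Xᴴ Yᴴ := by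
  have hadj : Vᴴ * Xᴴ = Yᴴ * Vᴴ := by rw [← conjTranspose_mul, ← conjTranspose_mul, h]
  unfold Intertwines
  rw [← smul_right_inj hc]
  calc c • (Xᴴ * V) = V * Vᴴ * Xᴴ * V := by
        rw [mul_conjTranspose_eq_smul_one hV hc, Matrix.smul_mul, Matrix.smul_mul, Matrix.one_mul]
    _ = V * Yᴴ * (Vᴴ * V) := by simp only [Matrix.mul_assoc, hadj]
    _ = c • (V * Yᴴ) := by rw [hV, Matrix.mul_smul, Matrix.mul_one]

end Intertwining

lemma Matrix.det_sub_smul_one_eq_of_mul_eq_mul {n R : Type*} [Fintype n] [DecidableEq n]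
    [CommRing R] {M N S : Matrix n n R} (hS : IsUnit S.det) (h : M * S = S * N) (l : R) :
    (N - l • 1).det = (M - l • 1).det := by
  have h' : (M - l • 1) * S = S * (N - l • 1) := by
    rw [Matrix.sub_mul, Matrix.mul_sub, h, Matrix.smul_mul, Matrix.mul_smul, Matrix.one_mul,
      Matrix.mul_one]
  have hdet := congrArg det h'
  rw [det_mul, det_mul, mul_comm] at hdet
  exact (hS.mul_left_cancel hdet).symm

section Blocks

variable {n : Type*} [Fintype n] [DecidableEq n]

def hermitianBlock3 {α : Type*} [Zero α] [Star α] (A B C : Matrix n n α) :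
    Matrix (Fin 3 × n) (Fin 3 × n) α :=
  comp _ _ _ _ _ !![0, A, B; Aᴴ, 0, C; Bᴴ, Cᴴ, 0]

def cyclicBlock3 {α : Type*} [Zero α] (V : Matrix n n α) : Matrix (Fin 3 × n) (Fin 3 × n) α :=
  comp _ _ _ _ _ !![0, 0, V; V, 0, 0; 0, V, 0]

lemma isUnit_det_cyclicBlock3 {R : Type*} [CommRing R] {V : Matrix n n R} (hV : IsUnit V.det) :
    IsUnit (cyclicBlock3 V).det := by
  refine isUnit_det_of_right_inverse
    (B := comp _ _ _ _ _ !![0, V⁻¹, 0; 0, 0, V⁻¹; V⁻¹, 0, 0]) ?_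
  rw [cyclicBlock3, ← compRingEquiv_apply, ← compRingEquiv_apply, ← map_mul, mul_fin_three]
  simp [mul_nonsing_inv V hV, ← one_fin_three, comp_one]

lemma hermitianBlock3_mul_cyclicBlock3 {𝕜 : Type*} [Field 𝕜] [StarRing 𝕜]
    {V A B C A' B' C' : Matrix n n 𝕜} {c : 𝕜}
    (hV : Vᴴ * V = c • 1) (hc : c ≠ 0) (hA : Intertwines V Aᴴ B')
    (hB : Intertwines V Bᴴ C') (hC : Intertwines V C A') :
    hermitianBlock3 A B C * cyclicBlock3 V = cyclicBlock3 V * hermitianBlock3 A' B' C' := by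
  have hA' := hA.conjTranspose hV hc
  have hB' := hB.conjTranspose hV hc
  have hC' := hC.conjTranspose hV hc
  rw [conjTranspose_conjTranspose] at hA' hB'
  unfold Intertwines at *
  simp only [hermitianBlock3, cyclicBlock3, ← compRingEquiv_apply, ← map_mul, mul_fin_three]
  simp [hA, hB, hC, hA', hB', hC']

end Blocks

lemma star_cexp_I_mul_ofReal (x : ℝ) : star (cexp (I * x)) = cexp (-I * x) := by
  rw [Complex.star_def, ← Complex.exp_conj]; simp

lemma star_cexp_neg_I_mul_ofReal (x : ℝ) : star (cexp (-I * x)) = cexp (I * x) := by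
  rw [Complex.star_def, ← Complex.exp_conj]; simp

/-- `phase p q (2 * x) = e^{iγx}`. -/
def phase (p : ℤ) (q : ℕ) (x : ℂ) : ℂ := exp (π * I * p * x / q)

section Phase

variable {p : ℤ} {q : ℕ}

lemma phase_zero : phase p q 0 = 1 := by simp [phase]

lemma phase_add (x y : ℂ) : phase p q (x + y) = phase p q x * phase p q y := by
  rw [phase, phase, phase, ← Complex.exp_add]; ring_nf

lemma phase_nat_mul (n : ℕ) (x : ℂ) : phase p q (n * x) = phase p q x ^ n := by
  rw [phase, phase, ← Complex.exp_nat_mul]; ring_nf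

lemma star_phase (x : ℂ) : star (phase p q x) = phase p q (-star x) := by
  rw [phase, phase, Complex.star_def, ← exp_conj]
  simp [map_mul, conj_ofReal, conj_I]

lemma phase_eq_of_eq_add [NeZero q] {x y : ℂ} (n : ℤ) (h : x = y + 2 * q * n) :
    phase p q x = phase p q y := by
  have hq : (q : ℂ) ≠ 0 := NeZero.ne _
  refine exp_eq_exp_iff_exists_int.2 ⟨p * n, ?_⟩
  rw [h]; push_cast; field_simp

lemma phase_two_mul_intCast_eq_one_iff [NeZero q] (hpq : Int.gcd p q = 1) (m : ℤ) :
    phase p q (2 * m) = 1 ↔ (q : ℤ) ∣ m := by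
  have hζ := Complex.isPrimitiveRoot_exp q (NeZero.ne q)
  have : phase p q (2 * m) = exp (2 * π * I / q) ^ (p * m) := by
    rw [← Complex.exp_int_mul, phase]; push_cast; ring_nf
  rw [this, hζ.zpow_eq_one_iff_dvd]
  exact ⟨fun h => Int.dvd_of_dvd_mul_right_of_gcd_one h (by rwa [Int.gcd_comm]),
    fun h => h.mul_left p⟩

end Phase

lemma Fin.exists_val_add_one_eq {q : ℕ} [NeZero q] (j : Fin q) :
    ∃ t : ℕ, t ≤ 1 ∧ (((j + 1 : Fin q) : ℕ) : ℂ) = (j : ℕ) + 1 - q * t := by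
  refine ⟨((j : ℕ) + 1) / q, Nat.div_le_of_le_mul (by omega), ?_⟩
  rw [Fin.val_add, Fin.val_one', Nat.add_mod_mod, eq_sub_iff_add_eq]
  exact_mod_cast Nat.mod_add_div ((j : ℕ) + 1) q

section Shift

variable {q : ℕ} [NeZero q]

lemma Kmat_apply (j k : Fin q) : Kmat q j k = if j + 1 = k then 1 else 0 := by
  simp [Kmat, Fin.ext_iff, Fin.val_add, Nat.add_mod_mod]

lemma Kmat_mul_apply (X : Matrix (Fin q) (Fin q) ℂ) (j k : Fin q) :
    (Kmat q * X) j k = X (j + 1) k := by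
  simp [mul_apply, Kmat_apply]

lemma mul_conjTranspose_Kmat_apply (X : Matrix (Fin q) (Fin q) ℂ) (j k : Fin q) :
    (X * (Kmat q)ᴴ) j k = X j (k + 1) := by
  simp [mul_apply, Kmat_apply]

lemma Kmat_mul_conjTranspose : Kmat q * (Kmat q)ᴴ = 1 := by
  ext j k
  simp [mul_conjTranspose_Kmat_apply, Kmat_apply, one_apply]

lemma conjTranspose_Kmat_mul : (Kmat q)ᴴ * Kmat q = 1 :=
  mul_eq_one_comm.mp Kmat_mul_conjTranspose

end Shift

section Clock

variable {p : ℤ} {q : ℕ}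

lemma Jmat_eq_diagonal_phase :
    Jmat p q = diagonal fun j : Fin q => phase p q (2 * (j : ℕ)) := by
  simp only [Jmat, phase]; congr; ext j; congr 1; push_cast; ring

lemma conjTranspose_Jmat :
    (Jmat p q)ᴴ = diagonal fun j : Fin q => phase p q (-(2 * (j : ℕ))) := by
  simp [Jmat_eq_diagonal_phase, star_phase]

lemma Kmat_mul_conjTranspose_Jmat [NeZero q] :
    Kmat q * (Jmat p q)ᴴ = phase p q (-2) • ((Jmat p q)ᴴ * Kmat q) := by
  ext j k
  rw [Matrix.smul_apply, Kmat_mul_apply, conjTranspose_Jmat, diagonal_mul, diagonal_apply,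
    Kmat_apply]
  split_ifs with h
  · obtain ⟨t, -, ht⟩ := j.exists_val_add_one_eq
    rw [ht, smul_eq_mul, mul_one, ← phase_add]
    exact phase_eq_of_eq_add t (by push_cast; ring)
  · simp

end Clock

/-- The Fourier kernel `e^{2πi p jk/q}` turns the clock `J` into the shift `K*`; the quadratic
chirp `j²` makes `K` pick up a factor `J`, and the term `jq` makes the entries `q`-periodic in
`j` as well as in `k`. -/
def chirp (p : ℤ) (q : ℕ) : Matrix (Fin q) (Fin q) ℂ :=
  of fun j k => phase p q ((j : ℕ) * q + (j : ℕ) ^ 2 + 2 * (j : ℕ) * (k : ℕ))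

section Chirp

variable {p : ℤ} {q : ℕ} [NeZero q]

lemma intertwines_Jmat : Intertwines (chirp p q) (Jmat p q) (Kmat q)ᴴ := by
  ext j k
  obtain ⟨t, -, ht⟩ := k.exists_val_add_one_eq
  rw [mul_conjTranspose_Kmat_apply, Jmat_eq_diagonal_phase, diagonal_mul]
  simp only [chirp, of_apply, ht, ← phase_add]
  exact phase_eq_of_eq_add ((j : ℕ) * t) (by push_cast; ring)

lemma intertwines_Kmat :
    Intertwines (chirp p q) (Kmat q) (phase p q (q - 1) • (Jmat p q * (Kmat q)ᴴ)) := by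
  ext j k
  obtain ⟨t, ht1, ht⟩ := j.exists_val_add_one_eq
  obtain ⟨s, -, hs⟩ := k.exists_val_add_one_eq
  have htt : (t : ℂ) ^ 2 = t := by interval_cases t <;> simp
  rw [Matrix.mul_smul, Matrix.smul_apply, Kmat_mul_apply, ← mul_assoc,
    mul_conjTranspose_Kmat_apply, Jmat_eq_diagonal_phase, mul_diagonal]
  simp only [chirp, of_apply, ht, hs, smul_eq_mul, ← phase_add]
  exact phase_eq_of_eq_add (s * ((j : ℕ) + 1) - t * ((j : ℕ) + 1 + (k : ℕ)))
    (by push_cast; linear_combination (q : ℂ) ^ 2 * htt)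

lemma conjTranspose_chirp_mul_chirp (hpq : Int.gcd p q = 1) :
    (chirp p q)ᴴ * chirp p q = (q : ℂ) • 1 := by
  ext l k
  set w := phase p q (2 * (((k : ℕ) : ℤ) - ((l : ℕ) : ℤ) : ℤ)) with hw
  have hterm : ∀ j : Fin q, star (chirp p q j l) * chirp p q j k = w ^ (j : ℕ) := by
    intro j
    rw [hw, ← phase_nat_mul]
    simp only [chirp, of_apply, star_phase, ← phase_add]
    congr 1; push_cast; simp; ring
  simp only [mul_apply, conjTranspose_apply, hterm, Matrix.smul_apply, one_apply, smul_eq_mul]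
  rw [Fin.sum_univ_eq_sum_range (w ^ ·)]
  split_ifs with hlk
  · subst hlk; simp [hw, phase_zero]
  · have hw1 : w ≠ 1 := by
      rw [Ne, hw, phase_two_mul_intCast_eq_one_iff hpq]
      intro hdvd
      have := Int.eq_zero_of_abs_lt_dvd hdvd (by rw [abs_lt]; omega)
      exact hlk (Fin.ext (by omega))
    have hwq : w ^ q = 1 := by
      rw [hw, ← phase_nat_mul, mul_left_comm, ← Int.cast_natCast q, ← Int.cast_mul,
        phase_two_mul_intCast_eq_one_iff hpq]
      exact dvd_mul_right _ _
    rw [geom_sum_eq hw1, hwq]; simp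

lemma isUnit_det_chirp (hpq : Int.gcd p q = 1) : IsUnit (chirp p q).det :=
  isUnit_det_of_left_inverse (B := (q : ℂ)⁻¹ • (chirp p q)ᴴ) <| by
    rw [Matrix.smul_mul, conjTranspose_chirp_mul_chirp hpq, smul_smul,
      inv_mul_cancel₀ (NeZero.ne _), one_smul]

end Chirp

section Rotation

variable {p : ℤ} {q : ℕ} [NeZero q]

lemma intertwines_conjTranspose_Kmat (hpq : Int.gcd p q = 1) :
    Intertwines (chirp p q) (Kmat q)ᴴ (phase p q (1 - q) • (Kmat q * (Jmat p q)ᴴ)) := by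
  have := intertwines_Kmat.conjTranspose (conjTranspose_chirp_mul_chirp hpq) (NeZero.ne (q : ℂ))
  simpa [conjTranspose_smul, star_phase] using this

lemma intertwines_Jmat_mul_conjTranspose_Kmat (hpq : Int.gcd p q = 1) :
    Intertwines (chirp p q) (Jmat p q * (Kmat q)ᴴ) (phase p q (1 - q) • (Jmat p q)ᴴ) := by
  have := intertwines_Jmat.mul (intertwines_conjTranspose_Kmat hpq)
  rwa [Matrix.mul_smul, ← Matrix.mul_assoc, conjTranspose_Kmat_mul, Matrix.one_mul] at this

lemma intertwines_conjTranspose_Kmat' (hpq : Int.gcd p q = 1) :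
    Intertwines (chirp p q) (Kmat q)ᴴ (phase p q (-1 - q) • ((Jmat p q)ᴴ * Kmat q)) := by
  have := intertwines_conjTranspose_Kmat hpq
  rwa [Kmat_mul_conjTranspose_Jmat, smul_smul, ← phase_add,
    show (1 - q + -2 : ℂ) = -1 - q by ring] at this

lemma intertwines_conjTranspose_Kmat_mul_Jmat (hpq : Int.gcd p q = 1) :
    Intertwines (chirp p q) ((Kmat q)ᴴ * Jmat p q) (phase p q (-1 - q) • (Jmat p q)ᴴ) := by
  have := (intertwines_conjTranspose_Kmat' hpq).mul intertwines_Jmat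
  rwa [Matrix.smul_mul, Matrix.mul_assoc, Kmat_mul_conjTranspose, Matrix.mul_one] at this

variable (ω θ₁ θ₂ : ℝ)

lemma intertwines_CK_AK (hpq : Int.gcd p q = 1) :
    Intertwines (chirp p q) (CK p q (θ₁ + p * π) (θ₂ + p * π) ω)
      (AK p q (-θ₁ + θ₂ + p * π) (-θ₁ + p * π) ω) := by
  have hq : (q : ℂ) ≠ 0 := NeZero.ne _
  rw [CK]
  refine ((((intertwines_Jmat_mul_conjTranspose_Kmat hpq).smul _).add
    ((intertwines_conjTranspose_Kmat' hpq).smul _)).smul _).of_eq_right ?_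
  rw [AK]
  match_scalars <;> simp only [phase, mul_one, ← Complex.exp_add]
  · exact exp_eq_exp_iff_exists_int.2 ⟨0, by field_simp; ring⟩
  · exact exp_eq_exp_iff_exists_int.2 ⟨p, by field_simp; ring⟩

lemma intertwines_conjTranspose_AK_BK (hpq : Int.gcd p q = 1) :
    Intertwines (chirp p q) (AK p q (θ₁ + p * π) (θ₂ + p * π) ω)ᴴ
      (BK p q (-θ₁ + θ₂ + p * π) (-θ₁ + p * π) ω) := by
  have hq : (q : ℂ) ≠ 0 := NeZero.ne _
  rw [AK]
  simp only [conjTranspose_smul, conjTranspose_add, conjTranspose_mul, conjTranspose_conjTranspose,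
    star_mul', star_cexp_I_mul_ofReal, star_cexp_neg_I_mul_ofReal]
  refine (((intertwines_Jmat.smul _).add
    ((intertwines_conjTranspose_Kmat_mul_Jmat hpq).smul _)).smul _).of_eq_right ?_
  rw [BK]
  match_scalars <;> simp only [phase, mul_one, ← Complex.exp_add]
  · exact exp_eq_exp_iff_exists_int.2 ⟨0, by push_cast; field_simp; ring⟩
  · exact exp_eq_exp_iff_exists_int.2 ⟨-p, by push_cast; field_simp; ring⟩

lemma intertwines_conjTranspose_BK_CK :
    Intertwines (chirp p q) (BK p q (θ₁ + p * π) (θ₂ + p * π) ω)ᴴ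
      (CK p q (-θ₁ + θ₂ + p * π) (-θ₁ + p * π) ω) := by
  have hq : (q : ℂ) ≠ 0 := NeZero.ne _
  rw [BK]
  simp only [conjTranspose_smul, conjTranspose_add, conjTranspose_conjTranspose,
    star_cexp_neg_I_mul_ofReal]
  refine (((intertwines_Jmat.smul _).add (intertwines_Kmat.smul _)).smul _).of_eq_right ?_
  rw [CK]
  match_scalars <;> simp only [phase, mul_one, ← Complex.exp_add]
  · exact exp_eq_exp_iff_exists_int.2 ⟨-p, by push_cast; field_simp; ring⟩
  · exact exp_eq_exp_iff_exists_int.2 ⟨-p, by push_cast; field_simp; ring⟩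

end Rotation

lemma MK_eq_hermitianBlock3 (p : ℤ) (q : ℕ) (θ₁ θ₂ ω : ℝ) :
    MK p q θ₁ θ₂ ω =
      hermitianBlock3 (AK p q θ₁ θ₂ ω) (BK p q θ₁ θ₂ ω) (CK p q θ₁ θ₂ ω) :=
  rfl

theorem stmt_11 (p : ℤ) (q : ℕ) (hq : 0 < q) (hpq : Int.gcd p (q : ℤ) = 1)
    (ω θ₁ θ₂ : ℝ) (l : ℂ) :
    PK p q (-θ₁ + θ₂ + p * Real.pi) (-θ₁ + p * Real.pi) ω l =
      PK p q (θ₁ + p * Real.pi) (θ₂ + p * Real.pi) ω l := by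
  have : NeZero q := ⟨hq.ne'⟩
  have hV := conjTranspose_chirp_mul_chirp hpq
  have hq' : (q : ℂ) ≠ 0 := NeZero.ne _
  rw [PK, PK, MK_eq_hermitianBlock3, MK_eq_hermitianBlock3]
  exact det_sub_smul_one_eq_of_mul_eq_mul (isUnit_det_cyclicBlock3 (isUnit_det_chirp hpq))
    (hermitianBlock3_mul_cyclicBlock3 hV hq' (intertwines_conjTranspose_AK_BK ω θ₁ θ₂ hpq)
      (intertwines_conjTranspose_BK_CK ω θ₁ θ₂) (intertwines_CK_AK ω θ₁ θ₂ hpq)) l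
end
end
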